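/- arXiv:2305.12873 — 6 statements merged into one kernel-verified Lean document; each statement's English description precedes it below -/
import Mathlib

section
/- Let g : [1,∞) → [1,∞) be a continuous, positive, increasing function such that lim_{t→∞} t·g(t)/g(e^t) = a with a > 1. Then the series ∑_{n=1}^∞ 1/(n·g(n)) diverges. -/
open Filter Real Set

/-- Ermakoff's test, divergence half: if `g : [1,∞) → [1,∞)` is continuous, positive and
increasing with `t·g(t)/g(e^t) → a > 1`, then `∑ 1/(n g(n))` diverges. -/
theorem ermakoff_divergence (g : ℝ → ℝ) (a : ℝ) (ha : 1 < a)
    (hcont : ContinuousOn g (Set.Ici 1))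
    (hmap : ∀ t ≥ (1:ℝ), 1 ≤ g t)
    (hmono : MonotoneOn g (Set.Ici 1))
    (hlim : Tendsto (fun t : ℝ => t * g t / g (Real.exp t)) atTop (nhds a)) :
    ¬ Summable (fun n : ℕ => 1 / ((n : ℝ) * g n)) := by
  intro hs
  set f : ℝ → ℝ := fun t => 1 / (t * g t) with hfdef
  have hgpos : ∀ t ≥ (1:ℝ), 0 < g t := fun t ht => lt_of_lt_of_le one_pos (hmap t ht)
  have hden : ∀ t ≥ (1:ℝ), 0 < t * g t := fun t ht =>
    mul_pos (lt_of_lt_of_le one_pos ht) (hgpos t ht)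
  have hfpos : ∀ t ≥ (1:ℝ), 0 < f t := fun t ht => div_pos one_pos (hden t ht)
  have hfcont : ContinuousOn f (Ici 1) := by
    apply ContinuousOn.div continuousOn_const (continuousOn_id.mul hcont)
    intro t ht
    exact (hden t ht).ne'
  have hfanti : AntitoneOn f (Ici 1) := by
    intro s hs' t ht hst
    apply one_div_le_one_div_of_le (hden s hs')
    exact mul_le_mul hst (hmono hs' ht hst) (le_trans zero_le_one (hmap s hs'))
      (le_trans zero_le_one ht)
  -- interval integrability for f on subintervals of [1, ∞)
  have hInt : ∀ {u v : ℝ}, 1 ≤ u → u ≤ v → IntervalIntegrable f MeasureTheory.volume u v := by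
    intro u v hu huv
    apply ContinuousOn.intervalIntegrable
    rw [uIcc_of_le huv]
    exact hfcont.mono (fun x hx => le_trans hu hx.1)
  set c : ℝ := (1 + a) / 2 with hcdef
  have hc1 : 1 < c := by rw [hcdef]; linarith
  have hca : c < a := by rw [hcdef]; linarith
  obtain ⟨X0, hX0⟩ := (eventually_atTop.mp (hlim.eventually (eventually_ge_nhds hca)))
  set X : ℝ := max X0 1 with hXdef
  have hX1 : (1:ℝ) ≤ X := le_max_right _ _
  have hXa : ∀ t ≥ X, c ≤ t * g t / g (Real.exp t) := fun t ht =>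
    hX0 t (le_trans (le_max_left _ _) ht)
  -- pointwise key inequality
  have hexp1 : ∀ t ≥ X, (1:ℝ) ≤ Real.exp t := fun t ht =>
    Real.one_le_exp (by linarith [le_trans hX1 ht])
  have hpt : ∀ t ≥ X, c * f t ≤ Real.exp t * f (Real.exp t) := by
    intro t ht
    have ht1 : (1:ℝ) ≤ t := le_trans hX1 ht
    have hge : (1:ℝ) ≤ Real.exp t := hexp1 t ht
    have hgE : 0 < g (Real.exp t) := hgpos _ hge
    have h1 : c * g (Real.exp t) ≤ t * g t := by
      have := hXa t ht
      rwa [le_div_iff₀ hgE] at this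
    have hE : Real.exp t * f (Real.exp t) = 1 / g (Real.exp t) := by
      simp only [hfdef]
      field_simp
    rw [hE]
    rw [hfdef]
    rw [mul_one_div, div_le_div_iff₀ (hden t ht1) hgE]
    linarith [h1]
  -- the fixed positive quantity B₀
  set B0 : ℝ := ∫ t in (Real.exp X)..(Real.exp X + 1), f t with hB0def
  have heX1 : (1:ℝ) ≤ Real.exp X := hexp1 X le_rfl
  have hB0pos : 0 < B0 := by
    apply intervalIntegral.intervalIntegral_pos_of_pos_on
      (hInt heX1 (by linarith))
    · intro x hx
      exact hfpos x (le_trans heX1 hx.1.le)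
    · linarith
  -- tails tend to zero
  have htail : Tendsto (fun m : ℕ => ∑' k : ℕ, (1 : ℝ) / ((k + m : ℕ) * g (k + m : ℕ)))
      atTop (nhds 0) := tendsto_sum_nat_add (fun n : ℕ => (1:ℝ)/((n:ℝ) * g n))
  have hposlim : (0:ℝ) < (c - 1) * B0 := mul_pos (by linarith) hB0pos
  have hev : ∀ᶠ m : ℕ in atTop,
      (∑' k : ℕ, (1 : ℝ) / ((k + m : ℕ) * g (k + m : ℕ))) < (c - 1) * B0 ∧
      Real.exp X + 1 ≤ (m : ℝ) := by
    refine (htail.eventually (eventually_lt_nhds hposlim)).and ?_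
    exact tendsto_natCast_atTop_atTop.eventually_ge_atTop _
  obtain ⟨m, hm1, hm2⟩ := hev.exists
  -- basic facts about m
  have hmX : X ≤ (m:ℝ) := by
    have : X + 1 ≤ Real.exp X + 1 := by linarith [Real.add_one_le_exp X]
    linarith
  have hm1' : (1:ℝ) ≤ (m:ℝ) := le_trans hX1 hmX
  have hmE : Real.exp X ≤ (m:ℝ) := by linarith
  have hmEm : (m:ℝ) ≤ Real.exp m := by linarith [Real.add_one_le_exp (m:ℝ), hm1']
  -- substitution
  have hsub : (∫ t in X..(m:ℝ), Real.exp t * f (Real.exp t))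
      = ∫ u in (Real.exp X)..(Real.exp (m:ℝ)), f u := by
    have := intervalIntegral.integral_comp_smul_deriv'
      (f := Real.exp) (f' := Real.exp) (g := f) (a := X) (b := (m:ℝ))
      (fun x _ => Real.hasDerivAt_exp x) Real.continuous_exp.continuousOn ?_
    · simpa [Function.comp, smul_eq_mul] using this
    · apply hfcont.mono
      intro u hu
      obtain ⟨x, hx, rfl⟩ := hu
      rw [uIcc_of_le hmX] at hx
      exact mem_Ici.mpr (hexp1 x hx.1)
  -- the comparison integral inequality
  have hcontcomp : IntervalIntegrable (fun t => Real.exp t * f (Real.exp t)) MeasureTheory.volume X (m:ℝ) := by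
    apply ContinuousOn.intervalIntegrable
    apply Real.continuous_exp.continuousOn.mul
    apply hfcont.comp Real.continuous_exp.continuousOn
    intro x hx
    rw [uIcc_of_le hmX] at hx
    exact mem_Ici.mpr (hexp1 x hx.1)
  have hmono_int : c * (∫ t in X..(m:ℝ), f t) ≤ ∫ t in (Real.exp X)..(Real.exp (m:ℝ)), f t := by
    rw [← hsub, ← intervalIntegral.integral_const_mul]
    apply intervalIntegral.integral_mono_on hmX ((hInt hX1 hmX).const_mul c) hcontcomp
    intro x hx
    exact hpt x hx.1
  -- splitting integrals
  have hsplit1 : (∫ t in (Real.exp X)..(Real.exp (m:ℝ)), f t)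
      = (∫ t in (Real.exp X)..(m:ℝ), f t) + ∫ t in (m:ℝ)..(Real.exp (m:ℝ)), f t :=
    (intervalIntegral.integral_add_adjacent_intervals (hInt heX1 hmE)
      (hInt hm1' hmEm)).symm
  have hsplit2 : (∫ t in X..(m:ℝ), f t)
      = (∫ t in X..(Real.exp X), f t) + ∫ t in (Real.exp X)..(m:ℝ), f t :=
    (intervalIntegral.integral_add_adjacent_intervals
      (hInt hX1 (by linarith [Real.add_one_le_exp X])) (hInt heX1 hmE)).symm
  have hXeX : X ≤ Real.exp X := by linarith [Real.add_one_le_exp X]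
  have hnonneg1 : 0 ≤ ∫ t in X..(Real.exp X), f t := by
    apply intervalIntegral.integral_nonneg hXeX
    intro u hu
    exact (hfpos u (le_trans hX1 hu.1)).le
  have hEm_le : (∫ t in (Real.exp X)..(m:ℝ), f t) ≤ ∫ t in X..(m:ℝ), f t := by
    rw [hsplit2]; linarith
  -- B₀ is a lower bound for ∫_{e^X}^m f
  have hB0le : B0 ≤ ∫ t in (Real.exp X)..(m:ℝ), f t := by
    have hsplit3 : (∫ t in (Real.exp X)..(m:ℝ), f t)
        = B0 + ∫ t in (Real.exp X + 1)..(m:ℝ), f t :=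
      (intervalIntegral.integral_add_adjacent_intervals (hInt heX1 (by linarith))
        (hInt (by linarith) hm2)).symm
    have : 0 ≤ ∫ t in (Real.exp X + 1)..(m:ℝ), f t := by
      apply intervalIntegral.integral_nonneg hm2
      intro u hu
      exact (hfpos u (by linarith [hu.1])).le
    linarith
  -- lower bound for the remote piece
  have hlower : (c - 1) * B0 ≤ ∫ t in (m:ℝ)..(Real.exp (m:ℝ)), f t := by
    have h1 : c * (∫ t in X..(m:ℝ), f t)
        ≤ (∫ t in (Real.exp X)..(m:ℝ), f t) + ∫ t in (m:ℝ)..(Real.exp (m:ℝ)), f t := by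
      rw [← hsplit1]; exact hmono_int
    have h2 : c * (∫ t in (Real.exp X)..(m:ℝ), f t) ≤ c * (∫ t in X..(m:ℝ), f t) :=
      mul_le_mul_of_nonneg_left hEm_le (by linarith)
    nlinarith [hB0le, hB0pos]
  -- upper bound via the tail of the series
  set M : ℕ := ⌈Real.exp (m:ℝ)⌉₊ with hMdef
  have hEmM : Real.exp (m:ℝ) ≤ (M:ℝ) := Nat.le_ceil _
  have hmM : m ≤ M := by
    have : (m:ℝ) ≤ (M:ℝ) := le_trans hmEm hEmM
    exact_mod_cast this
  have hupper1 : (∫ t in (m:ℝ)..(Real.exp (m:ℝ)), f t) ≤ ∫ t in (m:ℝ)..(M:ℝ), f t := by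
    have hsplit4 : (∫ t in (m:ℝ)..(M:ℝ), f t)
        = (∫ t in (m:ℝ)..(Real.exp (m:ℝ)), f t) + ∫ t in (Real.exp (m:ℝ))..(M:ℝ), f t :=
      (intervalIntegral.integral_add_adjacent_intervals (hInt hm1' hmEm)
        (hInt (le_trans hm1' hmEm) hEmM)).symm
    have : 0 ≤ ∫ t in (Real.exp (m:ℝ))..(M:ℝ), f t := by
      apply intervalIntegral.integral_nonneg hEmM
      intro u hu
      exact (hfpos u (le_trans (le_trans hm1' hmEm) hu.1)).le
    linarith
  have hupper2 : (∫ t in (m:ℝ)..(M:ℝ), f t) ≤ ∑ x ∈ Finset.Ico m M, f x := by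
    apply AntitoneOn.integral_le_sum_Ico hmM
    apply hfanti.mono
    intro u hu
    exact le_trans hm1' hu.1
  have hupper3 : (∑ x ∈ Finset.Ico m M, f x)
      ≤ ∑' k : ℕ, (1 : ℝ) / ((k + m : ℕ) * g (k + m : ℕ)) := by
    rw [Finset.sum_Ico_eq_sum_range]
    have hsum : Summable (fun k : ℕ => (1 : ℝ) / ((k + m : ℕ) * g (k + m : ℕ))) := by
      exact_mod_cast (summable_nat_add_iff m).mpr hs
    have := Summable.sum_le_tsum (Finset.range (M - m))
      (fun k _ => by
        have hk1 : (1:ℝ) ≤ ((k + m : ℕ):ℝ) := by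
          have : (1:ℕ) ≤ k + m := le_add_self.trans' (by
            have : 1 ≤ m := by exact_mod_cast (le_trans (by norm_num) hm1' : (1:ℝ) ≤ (m:ℝ))
            omega)
          exact_mod_cast this
        exact le_of_lt (div_pos one_pos (hden _ hk1))) hsum
    refine le_trans (le_of_eq ?_) this
    apply Finset.sum_congr rfl
    intro k _
    simp only [hfdef]
    norm_num [add_comm m k]
  have : (c - 1) * B0 < (c - 1) * B0 := by
    calc (c - 1) * B0 ≤ ∫ t in (m:ℝ)..(Real.exp (m:ℝ)), f t := hlower
      _ ≤ ∫ t in (m:ℝ)..(M:ℝ), f t := hupper1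
      _ ≤ ∑ x ∈ Finset.Ico m M, f x := hupper2
      _ ≤ ∑' k : ℕ, (1 : ℝ) / ((k + m : ℕ) * g (k + m : ℕ)) := hupper3
      _ < (c - 1) * B0 := hm1
  exact lt_irrefl _ this
end

section
/- Let φ_X, φ_Y : [0,1] → [0,∞) be concave increasing functions with φ_X(0)=φ_Y(0)=0, φ_X(1)=φ_Y(1)=1, both strictly positive on (0,1], and let g : [1,∞) → [1,∞) be decreasing-in-1/t in the sense that t ↦ g(1/t) is decreasing on (0,1], with g(1)=1. Assume φ_X(t)/φ_Y(t) ≥ g(1/t) for all t ∈ (0,1]. Then for all s ∈ (0,1), φ_X^{-1}(s) ≤ φ_Y^{-1}(s / g(1/s)), where φ^{-1} denotes the (generalized right-continuous) inverse. -/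
open Filter Real Set

/-- The key claim in the proof of the main theorem: if `φ_X(t)/φ_Y(t) ≥ g(1/t)` on `(0,1]`,
then the generalized inverses satisfy `φ_X⁻¹(s) ≤ φ_Y⁻¹(s / g(1/s))` for `s ∈ (0,1)`. -/
theorem inverse_claim (φX φY g : ℝ → ℝ)
    (hXconc : ConcaveOn ℝ (Set.Icc 0 1) φX) (hYconc : ConcaveOn ℝ (Set.Icc 0 1) φY)
    (hXmono : MonotoneOn φX (Set.Icc 0 1)) (hYmono : MonotoneOn φY (Set.Icc 0 1))
    (hX0 : φX 0 = 0) (hY0 : φY 0 = 0) (hX1 : φX 1 = 1) (hY1 : φY 1 = 1)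
    (hXpos : ∀ t ∈ Set.Ioc (0:ℝ) 1, 0 < φX t) (hYpos : ∀ t ∈ Set.Ioc (0:ℝ) 1, 0 < φY t)
    (hgmap : ∀ t ≥ (1:ℝ), 1 ≤ g t) (hg1 : g 1 = 1)
    (hgdec : ∀ s t : ℝ, s ∈ Set.Ioc (0:ℝ) 1 → t ∈ Set.Ioc (0:ℝ) 1 → s ≤ t →
      g (1/t) ≤ g (1/s))
    (hratio : ∀ t ∈ Set.Ioc (0:ℝ) 1, g (1/t) ≤ φX t / φY t) :
    ∀ s ∈ Set.Ioo (0:ℝ) 1,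
      sInf {t ∈ Set.Icc (0:ℝ) 1 | s ≤ φX t} ≤
        sInf {t ∈ Set.Icc (0:ℝ) 1 | s / g (1/s) ≤ φY t} := by
  intro s hs
  obtain ⟨hs0, hs1⟩ := hs
  have hgs : (1:ℝ) ≤ g (1/s) := hgmap _ (by rw [ge_iff_le]; exact one_le_one_div hs0 hs1.le)
  have hgs0 : (0:ℝ) < g (1/s) := by linarith
  -- the key claim: t ≤ φX t for t ∈ [0,1], by concavity
  have hXlin : ∀ t ∈ Set.Icc (0:ℝ) 1, t ≤ φX t := by
    intro t ht
    obtain ⟨ht0, ht1⟩ := ht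
    have := hXconc.2 (show (0:ℝ) ∈ Set.Icc (0:ℝ) 1 by simp)
      (show (1:ℝ) ∈ Set.Icc (0:ℝ) 1 by simp)
      (show (0:ℝ) ≤ 1 - t by linarith) ht0 (by ring)
    simp only [smul_eq_mul, hX0, hX1, mul_zero, mul_one, zero_add] at this
    simpa using this
  -- set inclusion
  have hsub : {t ∈ Set.Icc (0:ℝ) 1 | s / g (1/s) ≤ φY t} ⊆
      {t ∈ Set.Icc (0:ℝ) 1 | s ≤ φX t} := by
    rintro t ⟨htI, htY⟩
    refine ⟨htI, ?_⟩
    obtain ⟨ht0, ht1⟩ := htI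
    have ht0' : 0 < t := by
      rcases lt_or_eq_of_le ht0 with h | h
      · exact h
      · exfalso
        rw [← h, hY0] at htY
        have : 0 < s / g (1/s) := div_pos hs0 hgs0
        linarith
    rcases le_or_gt s t with h | h
    · -- t ≥ s : use t ≤ φX t
      calc s ≤ t := h
        _ ≤ φX t := hXlin t ⟨ht0, ht1⟩
    · -- t < s : use the ratio bound
      have htmem : t ∈ Set.Ioc (0:ℝ) 1 := ⟨ht0', ht1⟩
      have hgt : g (1/s) ≤ g (1/t) := hgdec t s htmem ⟨hs0, le_of_lt hs1⟩ h.le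
      have hYt : 0 < φY t := hYpos t htmem
      have hXge : g (1/t) * φY t ≤ φX t := by
        have := hratio t htmem
        rw [le_div_iff₀ hYt] at this
        exact this
      have h1 : g (1/s) * φY t ≤ g (1/t) * φY t :=
        mul_le_mul_of_nonneg_right hgt hYt.le
      have h2 : s ≤ g (1/s) * φY t := by
        have := mul_le_mul_of_nonneg_left htY hgs0.le
        rwa [mul_div_cancel₀ _ (ne_of_gt hgs0)] at this
      linarith
  -- both sets nonempty and bounded below; compare infima
  have hne : ({t ∈ Set.Icc (0:ℝ) 1 | s / g (1/s) ≤ φY t}).Nonempty := by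
    refine ⟨1, ⟨by norm_num, by norm_num⟩, ?_⟩
    rw [hY1]
    calc s / g (1/s) ≤ s / 1 := by
          apply div_le_div_of_nonneg_left hs0.le one_pos hgs
      _ ≤ 1 := by rw [div_one]; linarith
  have hbdd : BddBelow {t ∈ Set.Icc (0:ℝ) 1 | s ≤ φX t} :=
    ⟨0, fun t ht => ht.1.1⟩
  exact csInf_le_csInf hbdd hne hsub
end

section
/- Let (P_j)_{j≥1} be a sequence of positive reals, C ≥ 1, g : [1,∞) → [1,∞) continuous increasing with g(1)=1, and h(j) = j·g(j). Suppose D ≥ 1 satisfies (1/(eC))·g(D e^t)/(t g(t)) > 1 for all t ≥ 1, P_1 > e^2·D, and for all j ≥ 1, P_{j+1} ≥ P_j·g(P_j)/(C·h(j+1)). Then P_j ≥ P_1·e^{j-1} for all j ≥ 1; in particular P_j → ∞. -/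
open Filter Real Set

/-- The inductive iteration step in the proof of the main theorem:
`P_j ≥ P_1 e^{j-1}` for all `j ≥ 1`, hence `P_j → ∞`. -/
theorem iteration_step (P : ℕ → ℝ) (C : ℝ) (hC : 1 ≤ C) (g : ℝ → ℝ)
    (hcont : ContinuousOn g (Set.Ici 1))
    (hmono : MonotoneOn g (Set.Ici 1))
    (hg1 : g 1 = 1) (hmap : ∀ t ≥ (1:ℝ), 1 ≤ g t)
    (hPpos : ∀ j : ℕ, 1 ≤ j → 0 < P j)
    (D : ℝ) (hD : 1 ≤ D)
    (hDineq : ∀ t ≥ (1:ℝ),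
      1 < (1 / (Real.exp 1 * C)) * (g (D * Real.exp t) / (t * g t)))
    (hP1 : Real.exp 2 * D < P 1)
    (hrec : ∀ j : ℕ, 1 ≤ j →
      P j * g (P j) / (C * (((j:ℝ) + 1) * g ((j:ℝ) + 1))) ≤ P (j + 1)) :
    (∀ j : ℕ, 1 ≤ j → P 1 * Real.exp ((j : ℝ) - 1) ≤ P j) ∧
      Tendsto P atTop atTop := by
  have hP1pos : 0 < P 1 := by
    have := Real.exp_pos 2
    nlinarith
  have key : ∀ j : ℕ, 1 ≤ j → P 1 * Real.exp ((j : ℝ) - 1) ≤ P j := by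
    intro j hj
    induction j, hj using Nat.le_induction with
    | base => simp
    | succ j hj ih =>
      set t : ℝ := (j : ℝ) + 1 with ht
      have hjR : (1:ℝ) ≤ (j : ℝ) := by exact_mod_cast hj
      have ht1 : (1:ℝ) ≤ t := by simp only [ht]; linarith
      have hgt1 : (1:ℝ) ≤ g t := hmap t ht1
      have hexp1 : (1:ℝ) ≤ Real.exp t := by
        rw [show (1:ℝ) = Real.exp 0 by simp]
        exact Real.exp_le_exp.mpr (by linarith)
      have hDet : (1:ℝ) ≤ D * Real.exp t := by nlinarith
      have hPjge : D * Real.exp t < P j := by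
        have heq : D * Real.exp t = Real.exp 2 * D * Real.exp ((j:ℝ) - 1) := by
          rw [mul_comm (Real.exp 2) D, mul_assoc, ← Real.exp_add]
          congr 1
          simp only [ht]; ring
        rw [heq]
        calc Real.exp 2 * D * Real.exp ((j:ℝ) - 1)
            < P 1 * Real.exp ((j:ℝ) - 1) :=
              mul_lt_mul_of_pos_right hP1 (Real.exp_pos _)
          _ ≤ P j := ih
      have hPj1 : (1:ℝ) ≤ P j := le_trans hDet hPjge.le
      have hPjpos : (0:ℝ) < P j := by linarith
      have htg : (0:ℝ) < t * g t := by nlinarith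
      have hCt : (0:ℝ) < C * (t * g t) := by nlinarith
      have hineq := hDineq t ht1
      have h2 : Real.exp 1 * C * (t * g t) < g (D * Real.exp t) := by
        rw [div_mul_div_comm, one_mul] at hineq
        have hpos : (0:ℝ) < Real.exp 1 * C * (t * g t) := by
          have := Real.exp_pos 1
          nlinarith
        rw [show Real.exp 1 * C * (t * g t) = Real.exp 1 * C * (t * g t) from rfl]
        exact (one_lt_div hpos).mp hineq
      have h3 : Real.exp 1 * C * (t * g t) < g (P j) :=
        lt_of_lt_of_le h2 (hmono hDet hPj1 hPjge.le)
      have h4 : P j * Real.exp 1 ≤ P j * g (P j) / (C * (t * g t)) := by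
        rw [le_div_iff₀ hCt]
        nlinarith [mul_le_mul_of_nonneg_left h3.le hPjpos.le]
      have h5 := hrec j hj
      have hgoal : P 1 * Real.exp ((↑(j + 1) : ℝ) - 1) = P 1 * Real.exp ((j:ℝ) - 1) * Real.exp 1 := by
        push_cast
        rw [mul_assoc, ← Real.exp_add]
        norm_num
      rw [hgoal]
      calc P 1 * Real.exp ((j:ℝ) - 1) * Real.exp 1
          ≤ P j * Real.exp 1 := mul_le_mul_of_nonneg_right ih (Real.exp_pos 1).le
        _ ≤ P j * g (P j) / (C * (t * g t)) := h4
        _ ≤ P (j + 1) := h5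
  refine ⟨key, ?_⟩
  have hlim : Tendsto (fun j : ℕ => P 1 * Real.exp ((j : ℝ) - 1)) atTop atTop := by
    apply Tendsto.const_mul_atTop hP1pos
    exact Real.tendsto_exp_atTop.comp
      (tendsto_atTop_add_const_right _ _ tendsto_natCast_atTop_atTop)
  refine tendsto_atTop_mono' _ ?_ hlim
  filter_upwards [eventually_ge_atTop 1] with j hj using key j hj
end

section
/- Let A, Â be strictly increasing continuous Young functions with A(0)=Â(0)=0 and A(∞)=Â(∞)=∞, and define φ_A(t) = 1/A^{-1}(1/t) and φ_Â(t) = 1/Â^{-1}(1/t) for t > 0. Let g : [1,∞) → [1,∞) be increasing with A(t·g(t)) ≤ Â(t) for all t > 1. Then for all s ∈ (0,1), φ_Â^{-1}(s) ≤ φ_A^{-1}(s / g(1/s)). -/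
open Filter Real Set

/-- The Orlicz-space reduction: if `A(t g(t)) ≤ Ahat(t)` for `t > 1`, then the fundamental
functions `φ_A(t) = 1/A⁻¹(1/t)`, `φ_Ahat(t) = 1/Ahat⁻¹(1/t)` satisfy the inverse-function
inequality `φ_Ahat⁻¹(s) ≤ φ_A⁻¹(s / g(1/s))` for `s ∈ (0,1)`. -/
theorem orlicz_reduction (A Ahat Ainv Ahatinv g : ℝ → ℝ)
    (hAconv : ConvexOn ℝ (Set.Ici 0) A) (hAhatconv : ConvexOn ℝ (Set.Ici 0) Ahat)
    (hAmono : StrictMonoOn A (Set.Ici 0)) (hAhatmono : StrictMonoOn Ahat (Set.Ici 0))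
    (hAcont : ContinuousOn A (Set.Ici 0)) (hAhatcont : ContinuousOn Ahat (Set.Ici 0))
    (hA0 : A 0 = 0) (hAhat0 : Ahat 0 = 0)
    (hAtop : Tendsto A atTop atTop) (hAhattop : Tendsto Ahat atTop atTop)
    (hAinvL : ∀ s ≥ (0:ℝ), Ainv (A s) = s)
    (hAinvR : ∀ u ≥ (0:ℝ), A (Ainv u) = u ∧ 0 ≤ Ainv u)
    (hAhatinvL : ∀ s ≥ (0:ℝ), Ahatinv (Ahat s) = s)
    (hAhatinvR : ∀ u ≥ (0:ℝ), Ahat (Ahatinv u) = u ∧ 0 ≤ Ahatinv u)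
    (hgmono : MonotoneOn g (Set.Ici 1)) (hgmap : ∀ t ≥ (1:ℝ), 1 ≤ g t)
    (hAAhat : ∀ t > (1:ℝ), A (t * g t) ≤ Ahat t) :
    ∀ s ∈ Set.Ioo (0:ℝ) 1,
      sInf {t : ℝ | 0 < t ∧ s ≤ 1 / Ahatinv (1/t)} ≤
        sInf {t : ℝ | 0 < t ∧ s / g (1/s) ≤ 1 / Ainv (1/t)} := by
  intro s hs
  obtain ⟨hs0, hs1⟩ := hs
  have hinv1 : 1 ≤ 1 / s := by rw [le_div_iff₀ hs0]; linarith
  have hg1 : 1 ≤ g (1 / s) := hgmap _ hinv1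
  have hgpos : 0 < g (1 / s) := by linarith
  set c : ℝ := g (1 / s) / s with hc
  have hcpos : 0 < c := by positivity
  apply csInf_le_csInf
  · exact ⟨0, fun x hx => hx.1.le⟩
  · -- nonemptiness of the right-hand set
    have hAc : 0 < A c := by
      have := hAmono (Set.self_mem_Ici) (le_of_lt hcpos) hcpos
      rwa [hA0] at this
    refine ⟨1 / A c, by positivity, ?_⟩
    rw [one_div_one_div, hAinvL c hcpos.le, hc, one_div_div]
  · -- subset
    rintro t ⟨ht0, htle⟩
    refine ⟨ht0, ?_⟩
    set u : ℝ := 1 / t with hu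
    have hupos : 0 < u := by positivity
    obtain ⟨hAa, ha0'⟩ := hAinvR u hupos.le
    obtain ⟨hAha, hha0'⟩ := hAhatinvR u hupos.le
    have ha0 : 0 < Ainv u := by
      rcases lt_or_eq_of_le ha0' with h | h
      · exact h
      · exfalso; rw [← h, hA0] at hAa; linarith
    have hha0 : 0 < Ahatinv u := by
      rcases lt_or_eq_of_le hha0' with h | h
      · exact h
      · exfalso; rw [← h, hAhat0] at hAha; linarith
    -- from htle : s / g(1/s) ≤ 1 / Ainv u deduce Ainv u ≤ c
    have hac : Ainv u ≤ c := by
      rw [div_le_div_iff₀ hgpos ha0] at htle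
      rw [hc, le_div_iff₀ hs0]
      nlinarith
    -- key claim : Ahatinv u ≤ 1/s
    have key : Ahatinv u ≤ 1 / s := by
      by_contra h
      push_neg at h
      have h1 : (1:ℝ) < Ahatinv u := lt_of_le_of_lt hinv1 h
      have hAA := hAAhat (Ahatinv u) h1
      rw [hAha] at hAA
      have hg2 : 1 ≤ g (Ahatinv u) := hgmap _ h1.le
      have hxmem : Ahatinv u * g (Ahatinv u) ∈ Set.Ici (0:ℝ) := by
        simp only [Set.mem_Ici]; positivity
      -- A (â g â) ≤ u = A (Ainv u)  ⇒  â g â ≤ Ainv u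
      have hmono : Ahatinv u * g (Ahatinv u) ≤ Ainv u := by
        by_contra hcon
        push_neg at hcon
        have := hAmono (Set.mem_Ici.mpr ha0') hxmem hcon
        rw [hAa] at this; linarith
      have hgcomp : g (1 / s) ≤ g (Ahatinv u) :=
        hgmono (Set.mem_Ici.mpr hinv1) (Set.mem_Ici.mpr h1.le) h.le
      have hclt : c < Ahatinv u * g (Ahatinv u) := by
        have h2 : c = (1 / s) * g (1 / s) := by rw [hc]; ring
        rw [h2]
        calc (1 / s) * g (1 / s) < Ahatinv u * g (1 / s) := by
              apply mul_lt_mul_of_pos_right h hgpos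
          _ ≤ Ahatinv u * g (Ahatinv u) := by
              apply mul_le_mul_of_nonneg_left hgcomp hha0'
      linarith
    rw [le_div_iff₀ hha0]
    calc s * Ahatinv u ≤ s * (1 / s) := by
          apply mul_le_mul_of_nonneg_left key hs0.le
      _ = 1 := by field_simp
end

section
/- Let β̄_X < β_Y be the upper Zippin index of φ_X and the lower Zippin index of φ_Y respectively (both φ_X, φ_Y : (0,∞)→(0,∞) increasing with finite dilation functions). Then there exists δ > 0 and c > 0 such that for all t ∈ (0,δ), φ_X(t)/φ_Y(t) ≥ c·t^{β_Y − β̄_X}; in particular φ_X(t)/φ_Y(t) → ∞ as t → 0⁺. -/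
/-!
Choose `β̄_X < α < β < β_Y` and dilation factors `s₀ > 1`, `s₁ < 1` witnessing the indices, so that
`φ_X(ts₀) ≤ s₀^α φ_X(t)` and `φ_Y(ts₁) ≤ s₁^β φ_Y(t)` for all `t > 0`. Iterating these along the
geometric sequences `s₀ⁿ`, `s₁ⁿ` and using monotonicity between consecutive terms gives
`φ_X(t) ≳ t^α` and `φ_Y(t) ≲ t^β` on `(0, 1]`, hence `φ_X(t)/φ_Y(t) ≳ t^(α - β)`, which blows up
at `0` and dominates `t^(β_Y - β̄_X)`.
-/

open Filter Real Set Topology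

/-- The dilation function `M_φ(s)` is the supremum of this set. -/
def dilationRatios (φ : ℝ → ℝ) (s : ℝ) : Set ℝ := {r | ∃ t > 0, r = φ (t * s) / φ t}

lemma apply_mul_pow_le_pow_mul {φ : ℝ → ℝ} {s K : ℝ} (hK : 0 ≤ K)
    (h : ∀ t > 0, φ (t * s) ≤ K * φ t) (hs : 0 < s) (n : ℕ) {t : ℝ} (ht : 0 < t) :
    φ (t * s ^ n) ≤ K ^ n * φ t := by
  induction n with
  | zero => simp
  | succ n ih =>
    calc φ (t * s ^ (n + 1)) = φ (t * s ^ n * s) := by rw [pow_succ, mul_assoc]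
      _ ≤ K * φ (t * s ^ n) := h _ (by positivity)
      _ ≤ K * (K ^ n * φ t) := by gcongr
      _ = K ^ (n + 1) * φ t := by ring

lemma rpow_le_rpow_abs_of_one_le {u s : ℝ} (hu : 1 ≤ u) (hus : u ≤ s) (α : ℝ) :
    u ^ α ≤ s ^ |α| :=
  (rpow_le_rpow_of_exponent_le hu (le_abs_self α)).trans
    (rpow_le_rpow (by linarith) hus (abs_nonneg α))

section PowerBounds

variable {φ : ℝ → ℝ} {s : ℝ}

lemma div_mul_rpow_le_of_apply_mul_le (hφ : MonotoneOn φ (Ioi 0)) (hφ0 : ∀ t > 0, 0 ≤ φ t)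
    (hs : 1 < s) {α : ℝ} (h : ∀ t > 0, φ (t * s) ≤ s ^ α * φ t) :
    ∀ t ∈ Ioc 0 1, φ 1 / s ^ |α| * t ^ α ≤ φ t := by
  rintro t ⟨ht0, ht1⟩
  obtain ⟨n, hn, hn'⟩ := exists_nat_pow_near (one_le_inv₀ ht0 |>.2 ht1) hs
  set u := t * s ^ (n + 1)
  have hu : 1 ≤ u := by
    have := mul_lt_mul_of_pos_left hn' ht0
    rw [mul_inv_cancel₀ ht0.ne'] at this
    exact this.le
  have hus : u ≤ s := by
    have := mul_le_mul_of_nonneg_left hn ht0.le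
    rw [mul_inv_cancel₀ ht0.ne'] at this
    calc u = t * s ^ n * s := by simp only [u, pow_succ, mul_assoc]
      _ ≤ s := by nlinarith
  have hs0 : 0 < s := by linarith
  have hupper : φ 1 ≤ s ^ |α| / t ^ α * φ t :=
    calc φ 1 ≤ φ u := hφ (mem_Ioi.2 one_pos) (mem_Ioi.2 (by linarith)) hu
      _ ≤ (s ^ α) ^ (n + 1) * φ t :=
        apply_mul_pow_le_pow_mul (by positivity) h hs0 (n + 1) ht0
      _ = u ^ α / t ^ α * φ t := by
        rw [rpow_pow_comm hs0.le, ← div_rpow (by positivity) ht0.le, mul_div_cancel_left₀ _ ht0.ne']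
      _ ≤ s ^ |α| / t ^ α * φ t := by
        gcongr
        · exact hφ0 t ht0
        · exact rpow_le_rpow_abs_of_one_le hu hus α
  calc φ 1 / s ^ |α| * t ^ α ≤ s ^ |α| / t ^ α * φ t / s ^ |α| * t ^ α := by gcongr
    _ = φ t := by field_simp

lemma apply_le_mul_rpow_of_apply_mul_le (hφ : MonotoneOn φ (Ioi 0)) (hφ1 : 0 ≤ φ 1)
    (hs0 : 0 < s) (hs1 : s < 1) {β : ℝ} (h : ∀ t > 0, φ (t * s) ≤ s ^ β * φ t) :
    ∀ t ∈ Ioc 0 1, φ t ≤ φ 1 * s⁻¹ ^ |β| * t ^ β := by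
  rintro t ⟨ht0, ht1⟩
  obtain ⟨n, hn, hn'⟩ := exists_nat_pow_near_of_lt_one ht0 ht1 hs0 hs1
  set u := s ^ n / t
  have hu : 1 ≤ u := (one_le_div ht0).2 hn'
  have hus : u ≤ s⁻¹ := by
    rw [div_le_iff₀ ht0, ← div_eq_inv_mul, le_div_iff₀ hs0, ← pow_succ]
    exact hn.le
  calc φ t ≤ φ (1 * s ^ n) := hφ ht0 (by simp only [mem_Ioi]; positivity) (by simpa using hn')
    _ ≤ (s ^ β) ^ n * φ 1 := apply_mul_pow_le_pow_mul (by positivity) h hs0 n one_pos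
    _ = t ^ β * u ^ β * φ 1 := by
      rw [rpow_pow_comm hs0.le, ← mul_rpow ht0.le (by positivity), mul_div_cancel₀ _ ht0.ne']
    _ ≤ t ^ β * s⁻¹ ^ |β| * φ 1 := by gcongr; exact rpow_le_rpow_abs_of_one_le hu hus β
    _ = φ 1 * s⁻¹ ^ |β| * t ^ β := by ring

end PowerBounds

section Dilation

variable {φ : ℝ → ℝ} {s M : ℝ}

lemma pos_of_mem_upperBounds_dilationRatios (hφ : ∀ t > 0, 0 < φ t) (hs : 0 < s)
    (hM : M ∈ upperBounds (dilationRatios φ s)) : 0 < M :=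
  (div_pos (hφ _ (by simpa using hs)) (hφ 1 one_pos)).trans_le (hM ⟨1, one_pos, rfl⟩)

lemma apply_mul_le_rpow_mul_of_mem_upperBounds (hφ : ∀ t > 0, 0 < φ t)
    (hM : M ∈ upperBounds (dilationRatios φ s)) {α : ℝ} (hMα : M ≤ s ^ α) {t : ℝ} (ht : 0 < t) :
    φ (t * s) ≤ s ^ α * φ t :=
  calc φ (t * s) ≤ M * φ t := (div_le_iff₀ (hφ t ht)).1 (hM ⟨t, ht, rfl⟩)
    _ ≤ s ^ α * φ t := by gcongr; exact (hφ t ht).le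

end Dilation

lemma le_rpow_of_log_div_log_lt {M s α : ℝ} (hM : 0 < M) (hs : 1 < s)
    (h : log M / log s < α) : M ≤ s ^ α :=
  ((lt_rpow_iff_log_lt hM (by linarith)).2 ((div_lt_iff₀ (log_pos hs)).1 h)).le

lemma le_rpow_of_lt_log_div_log {M s α : ℝ} (hM : 0 < M) (hs0 : 0 < s) (hs1 : s < 1)
    (h : α < log M / log s) : M ≤ s ^ α :=
  ((lt_rpow_iff_log_lt hM hs0).2 ((lt_div_iff_of_neg (log_neg hs0 hs1)).1 h)).le

lemma tendsto_atTop_of_mul_rpow_le {f : ℝ → ℝ} {c γ : ℝ} (hc : 0 < c) (hγ : γ < 0)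
    (h : ∀ t ∈ Ioo 0 1, c * t ^ γ ≤ f t) : Tendsto f (𝓝[>] 0) atTop :=
  tendsto_atTop_mono' _ (by filter_upwards [Ioo_mem_nhdsGT one_pos] with t ht using h t ht)
    ((tendsto_rpow_neg_nhdsGT_zero hγ).const_mul_atTop hc)

/-- A strict gap between Zippin indices `β̄_X < β_Y` gives a power-type gain:
`φ_X(t)/φ_Y(t) ≥ c t^{β_Y − β̄_X}` near `0`, and `φ_X(t)/φ_Y(t) → ∞` as `t → 0⁺`. -/
theorem zippin_gap_gain (φX φY MX MY : ℝ → ℝ)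
    (hXpos : ∀ t > (0:ℝ), 0 < φX t) (hYpos : ∀ t > (0:ℝ), 0 < φY t)
    (hXmono : MonotoneOn φX (Set.Ioi 0)) (hYmono : MonotoneOn φY (Set.Ioi 0))
    (hMX : ∀ s > (0:ℝ), IsLUB {r : ℝ | ∃ t > (0:ℝ), r = φX (t * s) / φX t} (MX s))
    (hMY : ∀ s > (0:ℝ), IsLUB {r : ℝ | ∃ t > (0:ℝ), r = φY (t * s) / φY t} (MY s))
    (hlt : (⨅ u : Set.Ioi (1:ℝ), Real.log (MX u.1) / Real.log u.1) <
           (⨆ u : Set.Ioo (0:ℝ) 1, Real.log (MY u.1) / Real.log u.1)) :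
    ∃ δ > (0:ℝ), ∃ c > (0:ℝ),
      (∀ t ∈ Set.Ioo (0:ℝ) δ,
        c * t ^ ((⨆ u : Set.Ioo (0:ℝ) 1, Real.log (MY u.1) / Real.log u.1) -
                 (⨅ u : Set.Ioi (1:ℝ), Real.log (MX u.1) / Real.log u.1)) ≤
          φX t / φY t) ∧
      Tendsto (fun t => φX t / φY t) (nhdsWithin 0 (Set.Ioi 0)) atTop := by
  set bX := ⨅ u : Ioi (1:ℝ), log (MX u.1) / log u.1
  set bY := ⨆ u : Ioo (0:ℝ) 1, log (MY u.1) / log u.1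
  obtain ⟨α, hXα, hαY⟩ := exists_between hlt
  obtain ⟨β, hαβ, hβY⟩ := exists_between hαY
  have : Nonempty (Ioi (1:ℝ)) := ⟨⟨2, by norm_num⟩⟩
  have : Nonempty (Ioo (0:ℝ) 1) := ⟨⟨1 / 2, by norm_num⟩⟩
  obtain ⟨⟨s₀, hs₀ : 1 < s₀⟩, hs₀α⟩ := exists_lt_of_ciInf_lt hXα
  obtain ⟨⟨s₁, hs₁ : s₁ ∈ Ioo 0 1⟩, hs₁β⟩ := exists_lt_of_lt_ciSup hβY
  have hs₀pos : 0 < s₀ := by linarith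
  have hMX₀ := (hMX s₀ hs₀pos).1
  have hMY₁ := (hMY s₁ hs₁.1).1
  have hX := div_mul_rpow_le_of_apply_mul_le hXmono (fun t ht ↦ (hXpos t ht).le) hs₀
    fun t ↦ apply_mul_le_rpow_mul_of_mem_upperBounds hXpos hMX₀ <| le_rpow_of_log_div_log_lt
      (pos_of_mem_upperBounds_dilationRatios hXpos hs₀pos hMX₀) hs₀ hs₀α
  have hY := apply_le_mul_rpow_of_apply_mul_le hYmono (hYpos 1 one_pos).le hs₁.1 hs₁.2
    fun t ↦ apply_mul_le_rpow_mul_of_mem_upperBounds hYpos hMY₁ <| le_rpow_of_lt_log_div_log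
      (pos_of_mem_upperBounds_dilationRatios hYpos hs₁.1 hMY₁) hs₁.1 hs₁.2 hs₁β
  set c := φX 1 / s₀ ^ |α| / (φY 1 * s₁⁻¹ ^ |β|)
  have hc : 0 < c := by
    have := hXpos 1 one_pos
    have := hYpos 1 one_pos
    have := hs₁.1
    positivity
  have hgain : ∀ t ∈ Ioo 0 1, c * t ^ (α - β) ≤ φX t / φY t := fun t ht ↦
    calc c * t ^ (α - β) = φX 1 / s₀ ^ |α| * t ^ α / (φY 1 * s₁⁻¹ ^ |β| * t ^ β) := by
          rw [rpow_sub ht.1]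
          ring
      _ ≤ φX t / φY t := div_le_div₀ (hXpos t ht.1).le (hX t (Ioo_subset_Ioc_self ht))
          (hYpos t ht.1) (hY t (Ioo_subset_Ioc_self ht))
  refine ⟨1, one_pos, c, hc, fun t ht ↦ ?_, tendsto_atTop_of_mul_rpow_le hc (by linarith) hgain⟩
  calc c * t ^ (bY - bX) ≤ c * t ^ (α - β) :=
        mul_le_mul_of_nonneg_left (rpow_le_rpow_of_exponent_ge ht.1 ht.2.le (by linarith)) hc.le
    _ ≤ φX t / φY t := hgain t ht
end

section
/- Let m ≥ 1 and α > 1. With iterated logarithms L₁(t) = 1 + ln(1/t), L_{n+1}(t) = 1 + ln(L_n(t)) on (0,1), the function b(t) = (∏_{j=1}^{m-1} L_j(t)) · (L_m(t))^α satisfies: g(s) := b(1/s) for s ≥ 1 is eventually increasing and lim_{s→∞} s·g(s)/g(e^s) = 0. Moreover, if α ≤ 1 this limit is not 0. -/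
open Filter Real Set

/-- Iterated logarithms: `iterLog 1 t = 1 + ln(1/t)`, `iterLog (n+1) t = 1 + ln(iterLog n t)`. -/
noncomputable def iterLog : ℕ → ℝ → ℝ
  | 0, t => 1 / t
  | n + 1, t => 1 + Real.log (iterLog n t)

lemma iterLog_succ_def (n : ℕ) (t : ℝ) :
    iterLog (n + 1) t = 1 + Real.log (iterLog n t) := rfl

lemma iterLog_one_inv (s : ℝ) : iterLog 1 (1/s) = 1 + Real.log s := by
  rw [iterLog_succ_def]
  simp [iterLog, one_div_one_div]

lemma one_le_iterLog (n : ℕ) {s : ℝ} (hs : 1 ≤ s) : 1 ≤ iterLog (n + 1) (1/s) := by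
  induction n with
  | zero =>
    rw [iterLog_one_inv]
    have := Real.log_nonneg hs
    linarith
  | succ p ih =>
    rw [iterLog_succ_def]
    have := Real.log_nonneg ih
    linarith

lemma one_le_iterLog' {n : ℕ} (hn : 1 ≤ n) {s : ℝ} (hs : 1 ≤ s) : 1 ≤ iterLog n (1/s) := by
  obtain ⟨p, rfl⟩ := Nat.exists_eq_add_of_le hn
  rw [add_comm]
  exact one_le_iterLog p hs

lemma iterLog_mono (n : ℕ) {s t : ℝ} (hs : 1 ≤ s) (hst : s ≤ t) :
    iterLog (n + 1) (1/s) ≤ iterLog (n + 1) (1/t) := by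
  induction n with
  | zero =>
    rw [iterLog_one_inv, iterLog_one_inv]
    have := Real.log_le_log (by linarith) hst
    linarith
  | succ p ih =>
    rw [iterLog_succ_def (p + 1) (1/s), iterLog_succ_def (p + 1) (1/t)]
    have h1 := one_le_iterLog p hs
    have := Real.log_le_log (by linarith) ih
    linarith

lemma iterLog_mono' {n : ℕ} (hn : 1 ≤ n) {s t : ℝ} (hs : 1 ≤ s) (hst : s ≤ t) :
    iterLog n (1/s) ≤ iterLog n (1/t) := by
  obtain ⟨p, rfl⟩ := Nat.exists_eq_add_of_le hn
  rw [add_comm]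
  exact iterLog_mono p hs hst

lemma iterLog_shift (n : ℕ) {s : ℝ} (hs : 1 ≤ s) :
    iterLog (n + 1) (1/s) ≤ iterLog (n + 2) (1/Real.exp s) := by
  induction n with
  | zero =>
    rw [iterLog_one_inv, iterLog_succ_def, iterLog_one_inv, Real.log_exp]
    have : Real.log s ≤ Real.log (1 + s) := Real.log_le_log (by linarith) (by linarith)
    linarith
  | succ p ih =>
    rw [iterLog_succ_def (p + 1) (1/s), show p + 1 + 2 = (p + 2) + 1 by ring,
      iterLog_succ_def (p + 2) (1/Real.exp s)]
    have h1 := one_le_iterLog p hs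
    have := Real.log_le_log (by linarith) ih
    linarith

lemma iterLog_shift2 (n : ℕ) {s : ℝ} (hs : 1 ≤ s) :
    iterLog (n + 2) (1/Real.exp s) ≤ 2 * iterLog (n + 1) (1/s) := by
  have hlog2 : Real.log 2 ≤ 1 := by
    have := Real.log_two_lt_d9
    linarith
  induction n with
  | zero =>
    rw [iterLog_succ_def, iterLog_one_inv, Real.log_exp, iterLog_one_inv]
    have h1 : Real.log (1 + s) ≤ Real.log 2 + Real.log s := by
      rw [← Real.log_mul two_ne_zero (by linarith)]
      exact Real.log_le_log (by linarith) (by linarith)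
    have h3 : 0 ≤ Real.log s := Real.log_nonneg hs
    linarith
  | succ p ih =>
    rw [show p + 1 + 2 = (p + 2) + 1 by ring, iterLog_succ_def (p + 2) (1/Real.exp s),
      iterLog_succ_def (p + 1) (1/s)]
    have h1 := one_le_iterLog p hs
    have hexp1 : (1:ℝ) ≤ Real.exp s := by
      have := Real.add_one_le_exp s
      linarith
    have h0 := one_le_iterLog (p + 1) hexp1
    have h2 : Real.log (iterLog (p + 2) (1/Real.exp s)) ≤
        Real.log 2 + Real.log (iterLog (p + 1) (1/s)) := by
      rw [← Real.log_mul two_ne_zero (by linarith)]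
      exact Real.log_le_log (by linarith) ih
    have h3 : 0 ≤ Real.log (iterLog (p + 1) (1/s)) := Real.log_nonneg h1
    linarith

lemma iterLog_tendsto (n : ℕ) :
    Tendsto (fun s : ℝ => iterLog (n + 1) (1/s)) atTop atTop := by
  induction n with
  | zero =>
    refine Tendsto.congr (fun s => (iterLog_one_inv s).symm) ?_
    exact tendsto_atTop_add_const_left _ _ Real.tendsto_log_atTop
  | succ p ih =>
    refine Tendsto.congr (fun s => (iterLog_succ_def (p + 1) (1/s)).symm) ?_
    exact tendsto_atTop_add_const_left _ _ (Real.tendsto_log_atTop.comp ih)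

lemma prod_nonneg_iterLog (k : ℕ) {s : ℝ} (hs : 1 ≤ s) :
    (1:ℝ) ≤ ∏ j ∈ Finset.Icc 1 k, iterLog j (1/s) := by
  calc (1:ℝ) = ∏ _j ∈ Finset.Icc 1 k, (1:ℝ) := by simp
    _ ≤ ∏ j ∈ Finset.Icc 1 k, iterLog j (1/s) :=
        Finset.prod_le_prod (by intro i _; norm_num)
          (fun j hj => one_le_iterLog' (Finset.mem_Icc.mp hj).1 hs)

lemma prod_upper (k : ℕ) {s : ℝ} (hs : 1 ≤ s) :
    s * ∏ j ∈ Finset.Icc 1 k, iterLog j (1/s) ≤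
      ∏ j ∈ Finset.Icc 1 (k + 1), iterLog j (1/Real.exp s) := by
  have hexp1 : (1:ℝ) ≤ Real.exp s := by
    have := Real.add_one_le_exp s; linarith
  induction k with
  | zero =>
    simp only [show Finset.Icc 1 0 = (∅ : Finset ℕ) by rfl, Finset.prod_empty, mul_one,
      Finset.Icc_self, Finset.prod_singleton, iterLog_one_inv, Real.log_exp]
    linarith
  | succ p ih =>
    rw [Finset.prod_Icc_succ_top (Nat.le_add_left 1 p) (fun j => iterLog j (1/s)),
      Finset.prod_Icc_succ_top (by omega : 1 ≤ p + 1 + 1) (fun j => iterLog j (1/Real.exp s)),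
      ← mul_assoc]
    exact mul_le_mul ih (iterLog_shift p hs)
      (by linarith [one_le_iterLog p hs])
      (le_trans zero_le_one (prod_nonneg_iterLog (p + 1) hexp1))

lemma prod_lower (k : ℕ) {s : ℝ} (hs : 1 ≤ s) :
    (∏ j ∈ Finset.Icc 1 (k + 1), iterLog j (1/Real.exp s)) ≤
      2 ^ (k + 1) * (s * ∏ j ∈ Finset.Icc 1 k, iterLog j (1/s)) := by
  induction k with
  | zero =>
    simp only [show Finset.Icc 1 0 = (∅ : Finset ℕ) by rfl, Finset.prod_empty, mul_one,
      Finset.Icc_self, Finset.prod_singleton, iterLog_one_inv, Real.log_exp, pow_one]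
    norm_num
    linarith
  | succ p ih =>
    rw [Finset.prod_Icc_succ_top (by omega : 1 ≤ p + 1 + 1) (fun j => iterLog j (1/Real.exp s)),
      Finset.prod_Icc_succ_top (Nat.le_add_left 1 p) (fun j => iterLog j (1/s))]
    have hexp1 : (1:ℝ) ≤ Real.exp s := by
      have := Real.add_one_le_exp s; linarith
    have h2 := iterLog_shift2 p hs
    have hnn : (0:ℝ) ≤ iterLog (p + 2) (1/Real.exp s) :=
      le_trans zero_le_one (one_le_iterLog (p + 1) hexp1)
    calc (∏ j ∈ Finset.Icc 1 (p + 1), iterLog j (1/Real.exp s)) * iterLog (p + 2) (1/Real.exp s)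
        ≤ (2 ^ (p + 1) * (s * ∏ j ∈ Finset.Icc 1 p, iterLog j (1/s))) *
            (2 * iterLog (p + 1) (1/s)) := by
          apply mul_le_mul ih h2 hnn
          have h4 := prod_nonneg_iterLog p hs
          have h5 : (0:ℝ) < 2 ^ (p + 1) := by positivity
          exact mul_nonneg h5.le (mul_nonneg (by linarith) (by linarith))
      _ = 2 ^ (p + 2) * (s * ((∏ j ∈ Finset.Icc 1 p, iterLog j (1/s)) *
            iterLog (p + 1) (1/s))) := by ring

lemma F_tendsto (α : ℝ) (hα : 1 < α) :
    Tendsto (fun x : ℝ => x * (1 + Real.log x) ^ α / x ^ α) atTop (nhds 0) := by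
  set c : ℝ := (α - 1) / 2 with hc
  have hc0 : 0 < c := by
    have : 0 < α - 1 := by linarith
    positivity
  have l1 : (fun x : ℝ => Real.log (Real.log x)) =o[atTop] Real.log :=
    Real.isLittleO_log_id_atTop.comp_tendsto Real.tendsto_log_atTop
  have lconst : (fun _ : ℝ => (1:ℝ)) =o[atTop] Real.log := by
    refine Asymptotics.isLittleO_const_left.mpr (Or.inr ?_)
    exact tendsto_abs_atTop_atTop.comp Real.tendsto_log_atTop
  have l2 : (fun x : ℝ => α * (1 + Real.log (Real.log x))) =o[atTop] Real.log := by
    have := (lconst.add l1).const_mul_left α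
    simpa [mul_add] using this
  have hbound := l2.def hc0
  have hmain : ∀ᶠ x : ℝ in atTop, x * (1 + Real.log x) ^ α / x ^ α ≤ x ^ (-c) := by
    filter_upwards [hbound, eventually_ge_atTop (Real.exp 1)] with x hb hx
    have he1 : (1:ℝ) ≤ Real.exp 1 := Real.one_le_exp zero_le_one
    have hx1 : 1 ≤ x := le_trans he1 hx
    have hx0 : 0 < x := by linarith
    have hlx : 1 ≤ Real.log x := by
      have := Real.log_le_log (Real.exp_pos 1) hx
      rwa [Real.log_exp] at this
    have h1 : Real.log (1 + Real.log x) ≤ 1 + Real.log (Real.log x) := by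
      have hle : 1 + Real.log x ≤ Real.exp 1 * Real.log x := by
        nlinarith [Real.add_one_le_exp 1, hlx]
      calc Real.log (1 + Real.log x) ≤ Real.log (Real.exp 1 * Real.log x) :=
            Real.log_le_log (by linarith) hle
        _ = 1 + Real.log (Real.log x) := by
            rw [Real.log_mul (Real.exp_ne_zero 1) (by linarith), Real.log_exp]
    have h2 : α * (1 + Real.log (Real.log x)) ≤ c * Real.log x := by
      rw [Real.norm_eq_abs, Real.norm_eq_abs, abs_of_nonneg (by linarith : (0:ℝ) ≤ Real.log x)]
        at hb
      calc α * (1 + Real.log (Real.log x)) ≤ |α * (1 + Real.log (Real.log x))| := le_abs_self _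
        _ ≤ c * Real.log x := hb
    have hα0 : (0:ℝ) ≤ α := by linarith
    have h3 : (1 + Real.log x) ^ α ≤ x ^ c := by
      rw [Real.rpow_def_of_pos (by linarith : (0:ℝ) < 1 + Real.log x),
        Real.rpow_def_of_pos hx0]
      apply Real.exp_le_exp.mpr
      calc Real.log (1 + Real.log x) * α ≤ (1 + Real.log (Real.log x)) * α :=
            mul_le_mul_of_nonneg_right h1 hα0
        _ = α * (1 + Real.log (Real.log x)) := mul_comm _ _
        _ ≤ c * Real.log x := h2
        _ = Real.log x * c := mul_comm _ _
    have hxα : (0:ℝ) < x ^ α := Real.rpow_pos_of_pos hx0 α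
    calc x * (1 + Real.log x) ^ α / x ^ α ≤ x * x ^ c / x ^ α := by
          exact (div_le_div_iff_of_pos_right hxα).mpr (mul_le_mul_of_nonneg_left h3 hx0.le)
      _ = x ^ (-c) := by
          rw [← Real.rpow_one_add' (by linarith) (by nlinarith : 1 + c ≠ 0),
            ← Real.rpow_sub hx0]
          congr 1
          rw [hc]; ring
  have hnn : ∀ᶠ x : ℝ in atTop, 0 ≤ x * (1 + Real.log x) ^ α / x ^ α := by
    filter_upwards [eventually_ge_atTop (1:ℝ)] with x hx
    have h0 : (0:ℝ) ≤ 1 + Real.log x := by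
      have := Real.log_nonneg hx; linarith
    have hx0 : (0:ℝ) ≤ x := by linarith
    positivity
  exact squeeze_zero' hnn hmain (tendsto_rpow_neg_atTop hc0)

/-- Example (3): `b(t) = (∏_{j=1}^{m-1} L_j(t)) (L_m(t))^α` gives
`g(s) = b(1/s)` eventually increasing and satisfying Ermakoff's condition iff `α > 1`. -/
theorem example_product_iterlog (m : ℕ) (hm : 1 ≤ m) (α : ℝ) :
    (1 < α →
      (∃ s₀ : ℝ, 1 ≤ s₀ ∧
        MonotoneOn (fun s : ℝ =>
          (∏ j ∈ Finset.Icc 1 (m - 1), iterLog j (1/s)) * iterLog m (1/s) ^ α)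
          (Set.Ici s₀)) ∧
      Tendsto (fun s : ℝ =>
          s * ((∏ j ∈ Finset.Icc 1 (m - 1), iterLog j (1/s)) * iterLog m (1/s) ^ α) /
            ((∏ j ∈ Finset.Icc 1 (m - 1), iterLog j (1 / Real.exp s)) *
              iterLog m (1 / Real.exp s) ^ α))
        atTop (nhds 0)) ∧
    (α ≤ 1 →
      ¬ Tendsto (fun s : ℝ =>
          s * ((∏ j ∈ Finset.Icc 1 (m - 1), iterLog j (1/s)) * iterLog m (1/s) ^ α) /
            ((∏ j ∈ Finset.Icc 1 (m - 1), iterLog j (1 / Real.exp s)) *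
              iterLog m (1 / Real.exp s) ^ α))
        atTop (nhds 0)) := by
  obtain ⟨k, rfl⟩ : ∃ k, m = k + 1 := ⟨m - 1, (Nat.succ_pred_eq_of_pos hm).symm⟩
  simp only [Nat.add_sub_cancel]
  constructor
  · -- case 1 < α
    intro hα
    have hα0 : (0:ℝ) ≤ α := by linarith
    constructor
    · -- monotone
      refine ⟨1, le_refl 1, ?_⟩
      intro a ha b hb hab
      have ha1 : (1:ℝ) ≤ a := mem_Ici.mp ha
      have hb1 : (1:ℝ) ≤ b := mem_Ici.mp hb
      have hP : (∏ j ∈ Finset.Icc 1 k, iterLog j (1/a)) ≤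
          ∏ j ∈ Finset.Icc 1 k, iterLog j (1/b) :=
        Finset.prod_le_prod
          (fun j hj => by
            have := one_le_iterLog' (Finset.mem_Icc.mp hj).1 ha1; linarith)
          (fun j hj => iterLog_mono' (Finset.mem_Icc.mp hj).1 ha1 hab)
      have hL := iterLog_mono k ha1 hab
      have hLa := one_le_iterLog k ha1
      exact mul_le_mul hP (Real.rpow_le_rpow (by linarith) hL hα0)
        (Real.rpow_nonneg (by linarith) α)
        (le_trans zero_le_one (prod_nonneg_iterLog k hb1))
    · -- Ermakoff limit
      have hFc : Tendsto (fun s : ℝ =>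
          iterLog (k+1) (1/Real.exp s) * (1 + Real.log (iterLog (k+1) (1/Real.exp s))) ^ α /
            iterLog (k+1) (1/Real.exp s) ^ α) atTop (nhds 0) := by
        have h := (F_tendsto α hα).comp ((iterLog_tendsto k).comp Real.tendsto_exp_atTop)
        exact h
      refine squeeze_zero' ?_ ?_ hFc
      · filter_upwards [eventually_ge_atTop (1:ℝ)] with s hs
        have hexp1 : (1:ℝ) ≤ Real.exp s := by
          have := Real.add_one_le_exp s; linarith
        have h1 := prod_nonneg_iterLog k hs
        have h2 := prod_nonneg_iterLog k hexp1
        have h3 := one_le_iterLog k hs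
        have h4 := one_le_iterLog k hexp1
        apply div_nonneg
        · exact mul_nonneg (by linarith)
            (mul_nonneg (by linarith) (Real.rpow_nonneg (by linarith) α))
        · exact mul_nonneg (by linarith) (Real.rpow_nonneg (by linarith) α)
      · filter_upwards [eventually_ge_atTop (1:ℝ)] with s hs
        have hexp1 : (1:ℝ) ≤ Real.exp s := by
          have := Real.add_one_le_exp s; linarith
        have hPe := prod_nonneg_iterLog k hexp1
        have hPs := prod_nonneg_iterLog k hs
        have hX1 := one_le_iterLog k hexp1
        have hL1 := one_le_iterLog k hs
        have hXα : (0:ℝ) < iterLog (k+1) (1/Real.exp s) ^ α :=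
          Real.rpow_pos_of_pos (by linarith) α
        have hD : 0 < (∏ j ∈ Finset.Icc 1 k, iterLog j (1/Real.exp s)) *
            iterLog (k+1) (1/Real.exp s) ^ α := mul_pos (by linarith) hXα
        rw [div_le_iff₀ hD]
        have hupper := prod_upper k hs
        rw [Finset.prod_Icc_succ_top (Nat.le_add_left 1 k)
          (fun j => iterLog j (1/Real.exp s))] at hupper
        have hsh : iterLog (k+1) (1/s) ≤ 1 + Real.log (iterLog (k+1) (1/Real.exp s)) :=
          iterLog_shift k hs
        have hrpow : iterLog (k+1) (1/s) ^ α ≤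
            (1 + Real.log (iterLog (k+1) (1/Real.exp s))) ^ α :=
          Real.rpow_le_rpow (by linarith) hsh hα0
        have hXne : iterLog (k+1) (1/Real.exp s) ≠ 0 := by linarith
        have hXαne : iterLog (k+1) (1/Real.exp s) ^ α ≠ 0 := ne_of_gt hXα
        have hG : (iterLog (k+1) (1/Real.exp s) *
              (1 + Real.log (iterLog (k+1) (1/Real.exp s))) ^ α /
              iterLog (k+1) (1/Real.exp s) ^ α) *
            ((∏ j ∈ Finset.Icc 1 k, iterLog j (1/Real.exp s)) *
              iterLog (k+1) (1/Real.exp s) ^ α) =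
            ((∏ j ∈ Finset.Icc 1 k, iterLog j (1/Real.exp s)) *
              iterLog (k+1) (1/Real.exp s)) *
              (1 + Real.log (iterLog (k+1) (1/Real.exp s))) ^ α := by
          field_simp
        calc s * ((∏ j ∈ Finset.Icc 1 k, iterLog j (1/s)) * iterLog (k+1) (1/s) ^ α)
            = (s * ∏ j ∈ Finset.Icc 1 k, iterLog j (1/s)) * iterLog (k+1) (1/s) ^ α := by
              ring
          _ ≤ ((∏ j ∈ Finset.Icc 1 k, iterLog j (1/Real.exp s)) *
                iterLog (k+1) (1/Real.exp s)) *
                (1 + Real.log (iterLog (k+1) (1/Real.exp s))) ^ α :=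
              mul_le_mul hupper hrpow (Real.rpow_nonneg (by linarith) α)
                (mul_nonneg (by linarith) (by linarith))
          _ = _ := hG.symm
  · -- case α ≤ 1
    intro hα hT
    have hε : (0:ℝ) < ((2:ℝ) ^ (k+1))⁻¹ := by positivity
    have hev : ∀ᶠ s : ℝ in atTop, ((2:ℝ) ^ (k+1))⁻¹ ≤
        s * ((∏ j ∈ Finset.Icc 1 k, iterLog j (1/s)) * iterLog (k+1) (1/s) ^ α) /
          ((∏ j ∈ Finset.Icc 1 k, iterLog j (1/Real.exp s)) *
            iterLog (k+1) (1/Real.exp s) ^ α) := by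
      filter_upwards [eventually_ge_atTop (1:ℝ)] with s hs
      have hsle : s ≤ Real.exp s := by
        have := Real.add_one_le_exp s; linarith
      have hexp1 : (1:ℝ) ≤ Real.exp s := by linarith
      have hPe := prod_nonneg_iterLog k hexp1
      have hPs := prod_nonneg_iterLog k hs
      have hX1 := one_le_iterLog k hexp1
      have hL1 := one_le_iterLog k hs
      have hXα : (0:ℝ) < iterLog (k+1) (1/Real.exp s) ^ α :=
        Real.rpow_pos_of_pos (by linarith) α
      have hD : 0 < (∏ j ∈ Finset.Icc 1 k, iterLog j (1/Real.exp s)) *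
          iterLog (k+1) (1/Real.exp s) ^ α := mul_pos (by linarith) hXα
      rw [le_div_iff₀ hD]
      have hmono : iterLog (k+1) (1/s) ≤ iterLog (k+1) (1/Real.exp s) :=
        iterLog_mono k hs hsle
      have hXne : iterLog (k+1) (1/Real.exp s) ≠ 0 := by linarith
      have e1 : iterLog (k+1) (1/Real.exp s) ^ α =
          iterLog (k+1) (1/Real.exp s) ^ (α - 1) * iterLog (k+1) (1/Real.exp s) := by
        rw [← Real.rpow_add_one hXne (α - 1)]
        congr 1
        ring
      have e3 : iterLog (k+1) (1/Real.exp s) ^ (α - 1) ≤ iterLog (k+1) (1/s) ^ (α - 1) :=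
        Real.rpow_le_rpow_of_nonpos (by linarith) hmono (by linarith)
      have e4 : iterLog (k+1) (1/s) ^ (α - 1) ≤ iterLog (k+1) (1/s) ^ α :=
        Real.rpow_le_rpow_of_exponent_le hL1 (by linarith)
      have hlow := prod_lower k hs
      rw [Finset.prod_Icc_succ_top (Nat.le_add_left 1 k)
        (fun j => iterLog j (1/Real.exp s))] at hlow
      have hDle : (∏ j ∈ Finset.Icc 1 k, iterLog j (1/Real.exp s)) *
          iterLog (k+1) (1/Real.exp s) ^ α ≤
          2 ^ (k+1) * (s * ((∏ j ∈ Finset.Icc 1 k, iterLog j (1/s)) *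
            iterLog (k+1) (1/s) ^ α)) := by
        calc (∏ j ∈ Finset.Icc 1 k, iterLog j (1/Real.exp s)) *
              iterLog (k+1) (1/Real.exp s) ^ α
            = ((∏ j ∈ Finset.Icc 1 k, iterLog j (1/Real.exp s)) *
                iterLog (k+1) (1/Real.exp s)) * iterLog (k+1) (1/Real.exp s) ^ (α - 1) := by
              rw [e1]; ring
          _ ≤ (2 ^ (k+1) * (s * ∏ j ∈ Finset.Icc 1 k, iterLog j (1/s))) *
                iterLog (k+1) (1/s) ^ α := by
              apply mul_le_mul hlow (le_trans e3 e4)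
                (Real.rpow_nonneg (by linarith) _)
              have h5 : (0:ℝ) < 2 ^ (k+1) := by positivity
              exact mul_nonneg h5.le (mul_nonneg (by linarith) (by linarith))
          _ = 2 ^ (k+1) * (s * ((∏ j ∈ Finset.Icc 1 k, iterLog j (1/s)) *
                iterLog (k+1) (1/s) ^ α)) := by ring
      calc ((2:ℝ) ^ (k+1))⁻¹ * ((∏ j ∈ Finset.Icc 1 k, iterLog j (1/Real.exp s)) *
              iterLog (k+1) (1/Real.exp s) ^ α)
          ≤ ((2:ℝ) ^ (k+1))⁻¹ * (2 ^ (k+1) * (s * ((∏ j ∈ Finset.Icc 1 k, iterLog j (1/s)) *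
              iterLog (k+1) (1/s) ^ α))) :=
            mul_le_mul_of_nonneg_left hDle (by positivity)
        _ = s * ((∏ j ∈ Finset.Icc 1 k, iterLog j (1/s)) * iterLog (k+1) (1/s) ^ α) := by
            field_simp
    rw [Metric.tendsto_nhds] at hT
    obtain ⟨s, h1s, h2s⟩ := (hev.and (hT _ hε)).exists
    rw [Real.dist_eq, sub_zero] at h2s
    have := le_abs_self (s * ((∏ j ∈ Finset.Icc 1 k, iterLog j (1/s)) *
      iterLog (k+1) (1/s) ^ α) /
      ((∏ j ∈ Finset.Icc 1 k, iterLog j (1/Real.exp s)) *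
        iterLog (k+1) (1/Real.exp s) ^ α))
    linarith
end
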